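/- arXiv:1702.00847 — 4 statements merged into one kernel-verified Lean document; each statement's English description precedes it below -/
import Mathlib

section
/- If a propositional clause C contains a literal L exactly once, and every binary resolvent of C upon L with clauses of a propositional CNF formula F \ {C} is a tautology (contains a complementary pair of literals), then for any assignment α falsifying C, the assignment α' obtained from α by flipping the truth value of the atom of L satisfies every clause of F \ {C} that α satisfies. -/
/-- A propositional literal: an atom together with a polarity. -/
abbrev PLit (α : Type) := α × Bool

/-- The complement of a literal. -/
def PLit.compl {α : Type} (l : PLit α) : PLit α := (l.1, !l.2)

/-- A propositional clause is a (finite) set of literals. -/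
abbrev PClause (α : Type) := Finset (PLit α)

/-- A literal is true under an assignment. -/
def plitTrue {α : Type} (v : α → Bool) (l : PLit α) : Prop := v l.1 = l.2

/-- An assignment satisfies a clause if it makes some literal true. -/
def psat {α : Type} (v : α → Bool) (C : PClause α) : Prop := ∃ l ∈ C, plitTrue v l

/-- A clause is a tautology if it contains a complementary pair of literals. -/
def ptaut {α : Type} (C : PClause α) : Prop := ∃ l ∈ C, PLit.compl l ∈ C

/-- Flip the truth value of the atom `a`. -/
def pflip {α : Type} [DecidableEq α] (v : α → Bool) (a : α) : α → Bool :=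
  fun b => if b = a then !(v b) else v b

/-!
Only the atom of `L` changes value, so a clause of `F \ {C}` can lose its satisfaction only if
`v` satisfied it through `L.compl` (`v` falsifies `L ∈ C`). The resolvent of `C` and that clause
is a tautology, so it contains a pair `m, m.compl`, one of which the flipped assignment makes
true. It does not come from `C.erase L`: `v` falsifies `C`, and `C` cannot contain `L.compl`,
which `v` makes true, so the flip leaves `C.erase L` false. Hence it lies in the clause.
-/

section

variable {α : Type}

theorem plitTrue_compl_iff (v : α → Bool) (l : PLit α) :
    plitTrue v l.compl ↔ ¬ plitTrue v l :=
  Bool.eq_not_iff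

theorem eq_of_fst_eq_of_plitTrue_iff {v : α → Bool} {l l' : PLit α} (hatom : l.1 = l'.1)
    (h : plitTrue v l ↔ plitTrue v l') : l = l' := by
  obtain ⟨a, b⟩ := l
  obtain ⟨a', b'⟩ := l'
  simp only [plitTrue] at hatom h
  subst hatom
  cases hv : v a <;> cases b <;> cases b' <;> simp_all

variable [DecidableEq α]

theorem plitTrue_pflip_of_ne (v : α → Bool) {l : PLit α} {a : α} (h : l.1 ≠ a) :
    plitTrue (pflip v a) l ↔ plitTrue v l := by
  simp [plitTrue, pflip, h]

theorem plitTrue_pflip_self (v : α → Bool) (l : PLit α) :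
    plitTrue (pflip v l.1) l ↔ ¬ plitTrue v l := by
  simpa [plitTrue, pflip] using Bool.eq_not_iff

theorem not_psat_pflip_erase {v : α → Bool} {C : PClause α} {L : PLit α} (hL : L ∈ C)
    (hfal : ¬ psat v C) : ¬ psat (pflip v L.1) (C.erase L) := by
  rintro ⟨l, hl, hlv⟩
  obtain ⟨hne, hlC⟩ := Finset.mem_erase.mp hl
  have hfalse : ∀ x ∈ C, ¬ plitTrue v x := fun x hx hxv => hfal ⟨x, hx, hxv⟩
  by_cases hatom : l.1 = L.1
  · rw [← hatom, plitTrue_pflip_self] at hlv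
    exact hne (eq_of_fst_eq_of_plitTrue_iff hatom (iff_of_false hlv (hfalse L hL)))
  · exact hfalse l hlC ((plitTrue_pflip_of_ne v hatom).mp hlv)

theorem psat_right_of_ptaut_union {w : α → Bool} {A B : PClause α}
    (htaut : ptaut (A ∪ B)) (hA : ¬ psat w A) : psat w B := by
  obtain ⟨m, hm, hmc⟩ := htaut
  have side : ∀ x ∈ A ∪ B, plitTrue w x → psat w B := fun x hx hxw =>
    (Finset.mem_union.mp hx).elim (fun hxA => (hA ⟨x, hxA, hxw⟩).elim) (fun hxB => ⟨x, hxB, hxw⟩)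
  by_cases hmw : plitTrue w m
  · exact side m hm hmw
  · exact side m.compl hmc ((plitTrue_compl_iff w m).mpr hmw)

end

/-- If clause `C` contains `L` (exactly once, clauses being sets of literals) and every binary
resolvent of `C` upon `L` with a clause of `F \ {C}` is a tautology, then flipping the atom of
`L` in an assignment falsifying `C` preserves satisfaction of all clauses of `F \ {C}`. -/
theorem stmt0 {α : Type} [DecidableEq α] (F : Set (PClause α)) (C : PClause α) (L : PLit α)
    (hL : L ∈ C)
    (hres : ∀ D ∈ F, D ≠ C → L.compl ∈ D → ptaut (C.erase L ∪ D.erase L.compl))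
    (v : α → Bool) (hfal : ¬ psat v C) :
    ∀ D ∈ F, D ≠ C → psat v D → psat (pflip v L.1) D := by
  rintro D hD hne ⟨l, hl, hlv⟩
  by_cases hatom : l.1 = L.1
  · have hLcompl : l = L.compl :=
      eq_of_fst_eq_of_plitTrue_iff hatom
        (iff_of_true hlv ((plitTrue_compl_iff v L).mpr fun hLv => hfal ⟨L, hL, hLv⟩))
    subst hLcompl
    obtain ⟨m, hm, hmw⟩ :=
      psat_right_of_ptaut_union (hres D hD hne hl) (not_psat_pflip_erase hL hfal)
    exact ⟨m, Finset.mem_of_mem_erase hm, hmw⟩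
  · exact ⟨l, hl, (plitTrue_pflip_of_ne v hatom).mpr hlv⟩
end

section
/- Let C = L ∨ C' and D = N₁ ∨ … ∨ N_l ∨ D' be variable-disjoint first-order clauses without equality, let λ and τ be ground substitutions with N_iτ = ¬Lλ for all i and with no other literal of Dτ equal to ¬Lλ. If the L-resolvent of C and D obtained via a most general unifier σ of L, ¬N₁, …, ¬N_l is valid (contains a complementary pair of literals), then the ground clause C'λ ∨ (D \ {N₁,…,N_l})τ contains a complementary pair of ground literals. -/
/-- First-order terms over variables `V` and function symbols `Fn`. -/
inductive Term (V Fn : Type) : Type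
  | var : V → Term V Fn
  | app : Fn → List (Term V Fn) → Term V Fn

/-- A substitution maps variables to terms. -/
abbrev Subst (V Fn : Type) := V → Term V Fn

/-- Applying a substitution to a term. -/
def Term.subst {V Fn : Type} (σ : Subst V Fn) : Term V Fn → Term V Fn
  | .var v => σ v
  | .app f ts => .app f (ts.attach.map (fun t => Term.subst σ t.1))
  decreasing_by have := List.sizeOf_lt_of_mem t.2; simp at *; omega

/-- The set of variables occurring in a term. -/
def Term.vars {V Fn : Type} : Term V Fn → Set V
  | .var v => {v}
  | .app _ ts => {x | ∃ t ∈ ts.attach, x ∈ Term.vars t.1}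
  decreasing_by have := List.sizeOf_lt_of_mem t.2; simp at *; omega

/-- A term is ground if it contains no variables. -/
def Term.IsGround {V Fn : Type} (t : Term V Fn) : Prop := t.vars = ∅

/-- Composition of substitutions: `σ.comp γ` is "first σ, then γ". -/
def Subst.comp {V Fn : Type} (σ γ : Subst V Fn) : Subst V Fn :=
  fun v => (σ v).subst γ

/-- An atom: a predicate symbol applied to a list of argument terms. -/
structure Atom (V Fn P : Type) where
  pred : P
  args : List (Term V Fn)

/-- A literal: an atom with a polarity (`true` = positive). -/
structure Lit (V Fn P : Type) where
  pol : Bool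
  atom : Atom V Fn P

/-- The complement of a literal. -/
def Lit.compl {V Fn P : Type} (l : Lit V Fn P) : Lit V Fn P := ⟨!l.pol, l.atom⟩

def Atom.subst {V Fn P : Type} (σ : Subst V Fn) (A : Atom V Fn P) : Atom V Fn P :=
  ⟨A.pred, A.args.map (Term.subst σ)⟩

def Lit.subst {V Fn P : Type} (σ : Subst V Fn) (l : Lit V Fn P) : Lit V Fn P :=
  ⟨l.pol, l.atom.subst σ⟩

/-- A clause is a multiset (disjunction) of literals. -/
abbrev Clause (V Fn P : Type) := Multiset (Lit V Fn P)

def Clause.subst {V Fn P : Type} (σ : Subst V Fn) (C : Clause V Fn P) : Clause V Fn P :=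
  C.map (Lit.subst σ)

def Atom.vars {V Fn P : Type} (A : Atom V Fn P) : Set V := {x | ∃ t ∈ A.args, x ∈ t.vars}
def Lit.vars {V Fn P : Type} (l : Lit V Fn P) : Set V := l.atom.vars
def Clause.vars {V Fn P : Type} (C : Clause V Fn P) : Set V := {x | ∃ l ∈ C, x ∈ l.vars}

/-- A clause is ground if it contains no variables. -/
def Clause.IsGround {V Fn P : Type} (C : Clause V Fn P) : Prop := C.vars = ∅

/-- A substitution `σ` unifies a list of literals if it maps them all to the same literal. -/
def IsUnifier {V Fn P : Type} (σ : Subst V Fn) (ls : List (Lit V Fn P)) : Prop :=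
  ∀ l₁ ∈ ls, ∀ l₂ ∈ ls, l₁.subst σ = l₂.subst σ

/-- A most general unifier: every unifier factors through it. -/
def IsMGU {V Fn P : Type} (σ : Subst V Fn) (ls : List (Lit V Fn P)) : Prop :=
  IsUnifier σ ls ∧ ∀ τ, IsUnifier τ ls → ∃ γ, σ.comp γ = τ

/-- Validity of an equality-free clause: it contains a complementary pair of literals. -/
def Clause.ValidEF {V Fn P : Type} (C : Clause V Fn P) : Prop :=
  ∃ A : Atom V Fn P, (⟨true, A⟩ : Lit V Fn P) ∈ C ∧ (⟨false, A⟩ : Lit V Fn P) ∈ C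

/-- `C` (written as `L ∨ C'`) is blocked by `L` in `F`: all `L`-resolvents with clauses
of `F \ {L ∨ C'}` are valid. -/
def BlockedEF {V Fn P : Type} (L : Lit V Fn P) (C' : Clause V Fn P)
    (F : Set (Clause V Fn P)) : Prop :=
  ∀ D ∈ F, D ≠ L ::ₘ C' → ∀ Ns Drest : Clause V Fn P, Ns + Drest = D → Ns ≠ 0 →
    ∀ σ : Subst V Fn, IsMGU σ (L :: (Ns.map Lit.compl).toList) →
      Clause.ValidEF (C'.subst σ + Drest.subst σ)

/-- A propositional assignment on (ground) atoms. -/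
abbrev PAssign (V Fn P : Type) := Atom V Fn P → Bool

def litTrue {V Fn P : Type} (α : PAssign V Fn P) (l : Lit V Fn P) : Prop :=
  α l.atom = l.pol

/-- Propositional satisfaction of a (ground) clause. -/
def satC {V Fn P : Type} (α : PAssign V Fn P) (C : Clause V Fn P) : Prop :=
  ∃ l ∈ C, litTrue α l

/-- A first-order interpretation. -/
structure Interp (Fn P : Type) : Type 1 where
  dom : Type
  nonempty : Nonempty dom
  fn : Fn → List dom → dom
  pr : P → List dom → Prop

def Term.eval {V Fn P : Type} (I : Interp Fn P) (ρ : V → I.dom) : Term V Fn → I.dom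
  | .var v => ρ v
  | .app f ts => I.fn f (ts.attach.map (fun t => Term.eval I ρ t.1))
  decreasing_by have := List.sizeOf_lt_of_mem t.2; simp at *; omega

def litHolds {V Fn P : Type} (I : Interp Fn P) (ρ : V → I.dom) (l : Lit V Fn P) : Prop :=
  l.pol = true ↔ I.pr l.atom.pred (l.atom.args.map (Term.eval I ρ))

def clauseHolds {V Fn P : Type} (I : Interp Fn P) (ρ : V → I.dom) (C : Clause V Fn P) : Prop :=
  ∃ l ∈ C, litHolds I ρ l

/-- First-order satisfiability of a CNF formula (clauses implicitly universally quantified). -/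
def SatEF {V Fn P : Type} (F : Set (Clause V Fn P)) : Prop :=
  ∃ I : Interp Fn P, ∀ C ∈ F, ∀ ρ : V → I.dom, clauseHolds I ρ C

/-!
Glue `λ` on the variables of `L ∨ C'` and `τ` on those of `D` into one substitution `μ`
(possible because the clauses are variable-disjoint). Since every `Nᵢτ = ¬Lλ`, `μ` unifies
`L, ¬N₁, …, ¬N_l`, so it factors as `μ = σγ` through the mgu. Applying `γ` to the resolvent
`C'σ ∨ D'σ` gives exactly `C'λ ∨ D'τ`, and instances of a complementary pair stay complementary.
-/

open Set

namespace Term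

variable {V Fn : Type}

theorem subst_subst (σ γ : Subst V Fn) (t : Term V Fn) :
    (t.subst σ).subst γ = t.subst (σ.comp γ) := by
  induction t using Term.subst.induct with
  | case1 v => simp [Term.subst, Subst.comp]
  | case2 f ts ih =>
    rw [Term.subst, Term.subst, Term.subst]
    simp only [List.map_attach_eq_pmap, Term.app.injEq, true_and, List.pmap_eq_map,
      List.map_map]
    exact List.map_congr_left fun t ht => ih ⟨t, ht⟩

theorem subst_congr {σ σ' : Subst V Fn} {t : Term V Fn} (h : EqOn σ σ' t.vars) :
    t.subst σ = t.subst σ' := by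
  induction t using Term.subst.induct with
  | case1 v =>
    rw [Term.subst, Term.subst]
    exact h (show v ∈ (Term.var v : Term V Fn).vars by simp [Term.vars])
  | case2 f ts ih =>
    rw [Term.subst, Term.subst]
    simp only [List.map_attach_eq_pmap, Term.app.injEq, true_and, List.pmap_eq_map]
    refine List.map_congr_left fun t ht => ih ⟨t, ht⟩ fun v hv => h ?_
    rw [Term.vars]
    exact ⟨⟨t, ht⟩, List.mem_attach _ _, hv⟩

end Term

namespace Lit

variable {V Fn P : Type}

theorem subst_subst (σ γ : Subst V Fn) (l : Lit V Fn P) :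
    (l.subst σ).subst γ = l.subst (σ.comp γ) := by
  simp [Lit.subst, Atom.subst, Function.comp_def, Term.subst_subst]

theorem subst_congr {σ σ' : Subst V Fn} {l : Lit V Fn P} (h : EqOn σ σ' l.vars) :
    l.subst σ = l.subst σ' := by
  simp only [Lit.subst, Atom.subst, Lit.mk.injEq, Atom.mk.injEq, true_and]
  exact List.map_congr_left fun t ht => Term.subst_congr fun v hv => h ⟨t, ht, hv⟩

theorem compl_subst (σ : Subst V Fn) (l : Lit V Fn P) :
    l.compl.subst σ = (l.subst σ).compl := rfl

theorem compl_compl (l : Lit V Fn P) : l.compl.compl = l := by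
  simp [Lit.compl]

end Lit

namespace Clause

variable {V Fn P : Type}

theorem vars_subset_of_mem {l : Lit V Fn P} {C : Clause V Fn P} (h : l ∈ C) :
    l.vars ⊆ C.vars :=
  fun _ hv => ⟨l, h, hv⟩

theorem vars_mono {C D : Clause V Fn P} (h : C ≤ D) : C.vars ⊆ D.vars :=
  fun _ ⟨l, hl, hv⟩ => ⟨l, Multiset.mem_of_le h hl, hv⟩

theorem subst_add (σ : Subst V Fn) (C D : Clause V Fn P) :
    (C + D).subst σ = C.subst σ + D.subst σ :=
  Multiset.map_add _ _ _

theorem subst_subst (σ γ : Subst V Fn) (C : Clause V Fn P) :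
    (C.subst σ).subst γ = C.subst (σ.comp γ) := by
  simp [Clause.subst, Multiset.map_map, Lit.subst_subst]

theorem subst_congr {σ σ' : Subst V Fn} {C : Clause V Fn P} (h : EqOn σ σ' C.vars) :
    C.subst σ = C.subst σ' :=
  Multiset.map_congr rfl fun _ hl => Lit.subst_congr (h.mono (vars_subset_of_mem hl))

theorem ValidEF.subst {C : Clause V Fn P} (hC : C.ValidEF) (γ : Subst V Fn) :
    (C.subst γ).ValidEF := by
  obtain ⟨A, hpos, hneg⟩ := hC
  exact ⟨A.subst γ, Multiset.mem_map_of_mem (Lit.subst γ) hpos,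
    Multiset.mem_map_of_mem (Lit.subst γ) hneg⟩

end Clause

theorem IsUnifier.of_forall_subst_eq {V Fn P : Type} {μ : Subst V Fn} {ls : List (Lit V Fn P)}
    (t : Lit V Fn P) (h : ∀ l ∈ ls, l.subst μ = t) : IsUnifier μ ls :=
  fun l₁ h₁ l₂ h₂ => (h l₁ h₁).trans (h l₂ h₂).symm

theorem stmt4_general {V Fn P : Type} (L : Lit V Fn P) (C' Ns Drest : Clause V Fn P)
    (lam τ σ : Subst V Fn)
    (hdisj : Clause.vars (L ::ₘ C') ∩ Clause.vars (Ns + Drest) = ∅)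
    (hres : ∀ N ∈ Ns, N.subst τ = (L.subst lam).compl)
    (hmgu : IsMGU σ (L :: (Ns.map Lit.compl).toList))
    (hvalid : Clause.ValidEF (C'.subst σ + Drest.subst σ)) :
    Clause.ValidEF (C'.subst lam + Drest.subst τ) := by
  classical
  set μ := (Clause.vars (L ::ₘ C')).piecewise lam τ
  have hμlam : EqOn μ lam (Clause.vars (L ::ₘ C')) := piecewise_eqOn _ _ _
  have hμτ : EqOn μ τ (Clause.vars (Ns + Drest)) :=
    (piecewise_eqOn_compl _ _ _).mono (disjoint_iff_inter_eq_empty.2 hdisj).subset_compl_left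
  have hunif : IsUnifier μ (L :: (Ns.map Lit.compl).toList) := by
    refine IsUnifier.of_forall_subst_eq (L.subst lam) fun l hl => ?_
    rcases List.mem_cons.1 hl with rfl | hl
    · exact Lit.subst_congr (hμlam.mono (Clause.vars_subset_of_mem (Multiset.mem_cons_self _ _)))
    obtain ⟨N, hN, rfl⟩ := Multiset.mem_map.1 (Multiset.mem_toList.1 hl)
    have hNs : N ∈ Ns + Drest := Multiset.mem_add.2 (Or.inl hN)
    rw [Lit.compl_subst, Lit.subst_congr (hμτ.mono (Clause.vars_subset_of_mem hNs)), hres N hN,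
      Lit.compl_compl]
  obtain ⟨γ, hγ⟩ := hmgu.2 μ hunif
  have hlift : (C'.subst σ + Drest.subst σ).subst γ = C'.subst lam + Drest.subst τ := by
    rw [Clause.subst_add, Clause.subst_subst, Clause.subst_subst, hγ,
      Clause.subst_congr (hμlam.mono (Clause.vars_mono (Multiset.le_cons_self _ _))),
      Clause.subst_congr (hμτ.mono (Clause.vars_mono (Multiset.le_add_left _ _)))]
  exact hlift ▸ hvalid.subst γ

/-- Lifting lemma for `L`-resolvents: let `C = L ∨ C'` and `D = N₁ ∨ … ∨ N_l ∨ Drest` be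
variable-disjoint clauses, `lam`/`τ` ground substitutions with `Nᵢτ = ¬Lλ` for all `i` and no
literal of `Drest τ` equal to `¬Lλ`.  If the `L`-resolvent via an mgu `σ` of `L, ¬N₁, …, ¬N_l`
is valid, then the ground clause `C'λ ∨ Drest τ` contains a complementary pair. -/
theorem stmt4 {V Fn P : Type} (L : Lit V Fn P) (C' Ns Drest : Clause V Fn P)
    (lam τ σ : Subst V Fn)
    (hdisj : Clause.vars (L ::ₘ C') ∩ Clause.vars (Ns + Drest) = ∅)
    (hNs : Ns ≠ 0)
    (hground₁ : (Clause.subst lam (L ::ₘ C')).IsGround)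
    (hground₂ : (Clause.subst τ (Ns + Drest)).IsGround)
    (hres : ∀ N ∈ Ns, N.subst τ = (L.subst lam).compl)
    (hrest : ∀ M ∈ Drest, M.subst τ ≠ (L.subst lam).compl)
    (hmgu : IsMGU σ (L :: (Ns.map Lit.compl).toList))
    (hvalid : Clause.ValidEF (C'.subst σ + Drest.subst σ)) :
    Clause.ValidEF (C'.subst lam + Drest.subst τ) :=
  stmt4_general L C' Ns Drest lam τ σ hdisj hres hmgu hvalid
end

section
/- Equivalence flipping preserves satisfaction of ground instances of the equality axioms: if α is a propositional assignment on ground atoms satisfying all ground instances of the congruence axiom for a predicate P, namely t₁ ≉ s₁ ∨ … ∨ tₙ ≉ sₙ ∨ ¬P(t₁,…,tₙ) ∨ P(s₁,…,sₙ), and α' is obtained from α by equivalence flipping a ground literal L(u₁,…,uₙ) with predicate P, then α' also satisfies all ground instances of this axiom, provided α' agrees with α on all equality atoms. -/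
/-- Predicate symbols extended with the distinguished equality predicate `≈`. -/
inductive PSym (P : Type) : Type
  | eq
  | pr (p : P)

/-- The positive equality literal `s ≈ t`. -/
def eqL {V Fn P : Type} (s t : Term V Fn) : Lit V Fn (PSym P) := ⟨true, ⟨.eq, [s, t]⟩⟩
/-- The disequation literal `s ≉ t`. -/
def neqL {V Fn P : Type} (s t : Term V Fn) : Lit V Fn (PSym P) := ⟨false, ⟨.eq, [s, t]⟩⟩

/-- An interpretation interprets `≈` as identity on its domain. -/
def Interp.EqId {Fn P : Type} (I : Interp Fn (PSym P)) : Prop :=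
  ∀ a b : I.dom, I.pr .eq [a, b] ↔ a = b

/-- Validity in first-order logic with equality. -/
def ValidEq {V Fn P : Type} (C : Clause V Fn (PSym P)) : Prop :=
  ∀ I : Interp Fn (PSym P), I.EqId → ∀ ρ : V → I.dom, clauseHolds I ρ C

/-- Satisfiability in first-order logic with equality. -/
def SatEq {V Fn P : Type} (F : Set (Clause V Fn (PSym P))) : Prop :=
  ∃ I : Interp Fn (PSym P), I.EqId ∧ ∀ C ∈ F, ∀ ρ : V → I.dom, clauseHolds I ρ C

/-- The disequations `x₁ ≉ t₁ ∨ … ∨ xₙ ≉ tₙ` produced by flattening. -/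
def diseqs {V Fn P : Type} (xs : List V) (ts : List (Term V Fn)) : Clause V Fn (PSym P) :=
  ↑((xs.zip ts).map fun p => (neqL (Term.var p.1) p.2 : Lit V Fn (PSym P)))

/-- The flat `L`-resolvent of `L ∨ C'` with `Ns ∨ Drest` (resolving away the literals `Ns`,
all sharing `L`'s predicate with opposite polarity), using fresh variables `xs`
and the trivial mgu identifying all flattening variables. -/
def flatRes {V Fn P : Type} (xs : List V) (L : Lit V Fn (PSym P)) (C' : Clause V Fn (PSym P))
    (Ns Drest : Clause V Fn (PSym P)) : Clause V Fn (PSym P) :=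
  C' + Drest + diseqs xs L.atom.args + (Ns.map fun N => (diseqs xs N.atom.args : Clause V Fn (PSym P))).sum

/-- `L ∨ C'` is equality-blocked by `L` in `F`. -/
def EqBlocked {V Fn P : Type} (L : Lit V Fn (PSym P)) (C' : Clause V Fn (PSym P))
    (F : Set (Clause V Fn (PSym P))) : Prop :=
  L.atom.pred ≠ .eq ∧
  ∀ D ∈ F, D ≠ L ::ₘ C' → ∀ Ns Drest : Clause V Fn (PSym P), Ns + Drest = D → Ns ≠ 0 →
    (∀ N ∈ Ns, N.atom.pred = L.atom.pred ∧ N.pol = !L.pol ∧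
        N.atom.args.length = L.atom.args.length) →
    ∀ xs : List V, xs.Nodup → xs.length = L.atom.args.length →
      (∀ x ∈ xs, x ∉ Clause.vars (L ::ₘ C') ∧ x ∉ Clause.vars D) →
      ValidEq (flatRes xs L C' Ns Drest)

/-- Variable disequations `x₁ ≉ y₁ ∨ … ∨ xₙ ≉ yₙ`. -/
def varDiseqs {V Fn P : Type} (xs ys : List V) : Clause V Fn (PSym P) :=
  ↑((xs.zip ys).map fun p => (neqL (Term.var p.1) (Term.var p.2) : Lit V Fn (PSym P)))

/-- The equality axioms `E_L`: reflexivity, function congruence, predicate congruence. -/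
def ELset (V Fn P : Type) : Set (Clause V Fn (PSym P)) :=
  {C | (∃ x : V, C = {eqL (Term.var x) (Term.var x)}) ∨
       (∃ (f : Fn) (xs ys : List V), xs.length = ys.length ∧ (xs ++ ys).Nodup ∧
          C = varDiseqs xs ys +
              {eqL (Term.app f (xs.map Term.var)) (Term.app f (ys.map Term.var))}) ∨
       (∃ (p : PSym P) (xs ys : List V), xs.length = ys.length ∧ (xs ++ ys).Nodup ∧
          C = varDiseqs xs ys +
              {(⟨false, ⟨p, xs.map Term.var⟩⟩ : Lit V Fn (PSym P)),
               (⟨true, ⟨p, ys.map Term.var⟩⟩ : Lit V Fn (PSym P))})}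

open Classical in
/-- Equivalence flipping of the (ground) literal `L` with respect to `α`: invert the value of
every atom with `L`'s predicate whose arguments are `α`-equal to `L`'s arguments. -/
noncomputable def eqFlip {V Fn P : Type} (α : PAssign V Fn (PSym P)) (L : Lit V Fn (PSym P)) :
    PAssign V Fn (PSym P) := fun A =>
  if A.pred = L.atom.pred ∧ A.args.length = L.atom.args.length ∧
      (∀ p ∈ L.atom.args.zip A.args, α ⟨.eq, [p.1, p.2]⟩ = true)
  then !(α A) else α A


/-- A ground instance of the congruence axiom for the predicate `p` at argument lists
`ts`, `ss`: `t₁ ≉ s₁ ∨ … ∨ tₙ ≉ sₙ ∨ ¬p(t₁,…,tₙ) ∨ p(s₁,…,sₙ)`. -/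
def congrInst {V Fn P : Type} (p : PSym P) (ts ss : List (Term V Fn)) :
    Clause V Fn (PSym P) :=
  ↑((ts.zip ss).map fun q => (neqL q.1 q.2 : Lit V Fn (PSym P))) +
    {(⟨false, ⟨p, ts⟩⟩ : Lit V Fn (PSym P)), (⟨true, ⟨p, ss⟩⟩ : Lit V Fn (PSym P))}

/-
If `tᵢ ≈ sᵢ` holds for all `i`, then transitivity of `≈` makes the argument lists `t` and `s`
`≈`-equal to `u` at the same time, so the flip either changes the values of both `P(t)` and
`P(s)` or of neither; and the congruence axiom for `α`, used in both directions, makes these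
two values equal. Equal values satisfy `¬P(t) ∨ P(s)`. If some `tᵢ ≈ sᵢ` fails, the
disequation `tᵢ ≉ sᵢ` is true, and flipping does not touch equality atoms.
-/

namespace List

variable {α : Type*} {R : α → α → Prop} {S : α → Prop}

theorem Forall₂.symm_of_forall (hsymm : ∀ a b, S a → S b → R a b → R b a)
    {l₁ l₂ : List α} (h₁ : ∀ a ∈ l₁, S a) (h₂ : ∀ b ∈ l₂, S b) (h : Forall₂ R l₁ l₂) :
    Forall₂ R l₂ l₁ := by
  induction h with
  | nil => exact .nil
  | cons hab _ ih =>
    simp only [mem_cons, forall_eq_or_imp] at h₁ h₂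
    exact .cons (hsymm _ _ h₁.1 h₂.1 hab) (ih h₁.2 h₂.2)

theorem Forall₂.trans_of_forall (htrans : ∀ a b c, S a → S b → S c → R a b → R b c → R a c)
    {l₁ l₂ l₃ : List α} (h₁ : ∀ a ∈ l₁, S a) (h₂ : ∀ b ∈ l₂, S b) (h₃ : ∀ c ∈ l₃, S c)
    (h₁₂ : Forall₂ R l₁ l₂) (h₂₃ : Forall₂ R l₂ l₃) : Forall₂ R l₁ l₃ := by
  induction h₁₂ generalizing l₃ with
  | nil => exact h₂₃
  | cons hab _ ih =>
    cases h₂₃ with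
    | cons hbc h₂₃ =>
      simp only [mem_cons, forall_eq_or_imp] at h₁ h₂ h₃
      exact .cons (htrans _ _ _ h₁.1 h₂.1 h₃.1 hab hbc) (ih h₁.2 h₂.2 h₃.2 h₂₃)

end List

section

variable {V Fn P : Type}

def Equates (α : PAssign V Fn (PSym P)) (s t : Term V Fn) : Prop :=
  α ⟨.eq, [s, t]⟩ = true

theorem eqFlip_apply_of_pred_ne {α : PAssign V Fn (PSym P)} {L : Lit V Fn (PSym P)}
    {A : Atom V Fn (PSym P)} (h : A.pred ≠ L.atom.pred) : eqFlip α L A = α A := by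
  simp [eqFlip, h]

theorem eqFlip_congr {α : PAssign V Fn (PSym P)} {L : Lit V Fn (PSym P)}
    {A B : Atom V Fn (PSym P)} (hA : A.pred = L.atom.pred) (hB : B.pred = L.atom.pred)
    (hα : α A = α B)
    (hflip : List.Forall₂ (Equates α) L.atom.args A.args ↔
      List.Forall₂ (Equates α) L.atom.args B.args) :
    eqFlip α L A = eqFlip α L B := by
  simp only [List.forall₂_iff_zip, Equates] at hflip
  unfold eqFlip
  rw [hα]
  congr 1
  simp only [hA, hB, true_and, Prod.forall, @eq_comm _ A.args.length, @eq_comm _ B.args.length]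
  exact propext hflip

theorem forall₂_equates_iff_of_forall₂ {α : PAssign V Fn (PSym P)}
    (hsymm : ∀ s t : Term V Fn, s.IsGround → t.IsGround → Equates α s t → Equates α t s)
    (htrans : ∀ r s t : Term V Fn, r.IsGround → s.IsGround → t.IsGround →
      Equates α r s → Equates α s t → Equates α r t)
    {us ts ss : List (Term V Fn)} (hus : ∀ u ∈ us, u.IsGround) (hts : ∀ t ∈ ts, t.IsGround)
    (hss : ∀ s ∈ ss, s.IsGround) (h : List.Forall₂ (Equates α) ts ss) :
    List.Forall₂ (Equates α) us ts ↔ List.Forall₂ (Equates α) us ss :=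
  ⟨fun hut => hut.trans_of_forall htrans hus hts hss h,
    fun hus' => hus'.trans_of_forall htrans hus hss hts (h.symm_of_forall hsymm hts hss)⟩

theorem mem_congrInst {p : PSym P} {ts ss : List (Term V Fn)} {l : Lit V Fn (PSym P)} :
    l ∈ congrInst p ts ss ↔ l = ⟨false, ⟨p, ts⟩⟩ ∨
      (∃ t s, (t, s) ∈ ts.zip ss ∧ neqL t s = l) ∨ l = ⟨true, ⟨p, ss⟩⟩ := by
  simp [congrInst]

theorem satC_congrInst_of_mem_zip {β : PAssign V Fn (PSym P)} {p : PSym P}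
    {ts ss : List (Term V Fn)} {t s : Term V Fn} (hmem : (t, s) ∈ ts.zip ss)
    (h : ¬ Equates β t s) : satC β (congrInst p ts ss) :=
  ⟨neqL t s, mem_congrInst.2 (.inr (.inl ⟨t, s, hmem, rfl⟩)),
    by simpa [litTrue, neqL, Equates] using h⟩

theorem satC_congrInst_of_eq {β : PAssign V Fn (PSym P)} {p : PSym P}
    {ts ss : List (Term V Fn)} (h : β ⟨p, ts⟩ = β ⟨p, ss⟩) : satC β (congrInst p ts ss) := by
  cases hβ : β ⟨p, ts⟩
  · exact ⟨_, mem_congrInst.2 (.inl rfl), hβ⟩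
  · exact ⟨_, mem_congrInst.2 (.inr (.inr rfl)), h.symm.trans hβ⟩

theorem eq_true_of_satC_congrInst {α : PAssign V Fn (PSym P)} {p : PSym P}
    {ts ss : List (Term V Fn)} (hsat : satC α (congrInst p ts ss))
    (hE : List.Forall₂ (Equates α) ts ss) (h : α ⟨p, ts⟩ = true) : α ⟨p, ss⟩ = true := by
  obtain ⟨l, hl, hlt⟩ := hsat
  rcases mem_congrInst.1 hl with rfl | ⟨t, s, hmem, rfl⟩ | rfl
  · simp [litTrue, h] at hlt
  · have hts : Equates α t s := List.forall₂_zip hE hmem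
    simp only [litTrue, neqL] at hlt
    simp [Equates, hlt] at hts
  · exact hlt

end

theorem stmt10_general {V Fn P : Type} (α : PAssign V Fn (PSym P)) (p0 : P) (pol : Bool)
    (us : List (Term V Fn)) (hus : ∀ u ∈ us, u.IsGround)
    (hcongr : ∀ ts ss : List (Term V Fn), ts.length = ss.length →
      (∀ t ∈ ts ++ ss, t.IsGround) → satC α (congrInst (PSym.pr p0) ts ss))
    (hsymm : ∀ s t : Term V Fn, s.IsGround → t.IsGround →
      α ⟨.eq, [s, t]⟩ = true → α ⟨.eq, [t, s]⟩ = true)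
    (htrans : ∀ r s t : Term V Fn, r.IsGround → s.IsGround → t.IsGround →
      α ⟨.eq, [r, s]⟩ = true → α ⟨.eq, [s, t]⟩ = true → α ⟨.eq, [r, t]⟩ = true) :
    ∀ ts ss : List (Term V Fn), ts.length = ss.length → (∀ t ∈ ts ++ ss, t.IsGround) →
      satC (eqFlip α ⟨pol, ⟨PSym.pr p0, us⟩⟩) (congrInst (PSym.pr p0) ts ss) := by
  intro ts ss hlen hground
  have hts : ∀ t ∈ ts, t.IsGround := fun t ht => hground t (List.mem_append_left _ ht)
  have hss : ∀ s ∈ ss, s.IsGround := fun s hs => hground s (List.mem_append_right _ hs)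
  by_cases hE : List.Forall₂ (Equates α) ts ss
  · have hα : α ⟨.pr p0, ts⟩ = α ⟨.pr p0, ss⟩ := Bool.eq_iff_iff.2
      ⟨eq_true_of_satC_congrInst (hcongr ts ss hlen hground) hE,
        eq_true_of_satC_congrInst (hcongr ss ts hlen.symm (by simpa [or_comm] using hground))
          (hE.symm_of_forall hsymm hts hss)⟩
    exact satC_congrInst_of_eq
      (eqFlip_congr rfl rfl hα (forall₂_equates_iff_of_forall₂ hsymm htrans hus hts hss hE))
  · obtain ⟨t, s, hmem, hne⟩ : ∃ t s, (t, s) ∈ ts.zip ss ∧ ¬ Equates α t s := by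
      simpa [List.forall₂_iff_zip, hlen] using hE
    exact satC_congrInst_of_mem_zip hmem
      (by rwa [Equates, eqFlip_apply_of_pred_ne (A := ⟨.eq, [t, s]⟩) (by simp)])

/-- Equivalence flipping a ground literal with non-equality predicate `P` preserves
satisfaction of all ground instances of the congruence axiom for `P`, given that `α`
satisfies reflexivity, symmetry and transitivity of `≈` on ground terms (flipping
leaves all equality atoms unchanged). -/
theorem stmt10 {V Fn P : Type} (α : PAssign V Fn (PSym P)) (p0 : P) (pol : Bool)
    (us : List (Term V Fn)) (hus : ∀ u ∈ us, u.IsGround)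
    (hcongr : ∀ ts ss : List (Term V Fn), ts.length = ss.length →
      (∀ t ∈ ts ++ ss, t.IsGround) → satC α (congrInst (PSym.pr p0) ts ss))
    (hrefl : ∀ t : Term V Fn, t.IsGround → α ⟨.eq, [t, t]⟩ = true)
    (hsymm : ∀ s t : Term V Fn, s.IsGround → t.IsGround →
      α ⟨.eq, [s, t]⟩ = true → α ⟨.eq, [t, s]⟩ = true)
    (htrans : ∀ r s t : Term V Fn, r.IsGround → s.IsGround → t.IsGround →
      α ⟨.eq, [r, s]⟩ = true → α ⟨.eq, [s, t]⟩ = true → α ⟨.eq, [r, t]⟩ = true)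
    -- the flipped assignment agrees with `α` on all equality atoms
    (hagree : ∀ args : List (Term V Fn),
      eqFlip α ⟨pol, ⟨PSym.pr p0, us⟩⟩ ⟨.eq, args⟩ = α ⟨.eq, args⟩) :
    ∀ ts ss : List (Term V Fn), ts.length = ss.length → (∀ t ∈ ts ++ ss, t.IsGround) →
      satC (eqFlip α ⟨pol, ⟨PSym.pr p0, us⟩⟩) (congrInst (PSym.pr p0) ts ss) :=
  stmt10_general α p0 pol us hus hcongr hsymm htrans
end

section
/- Algorithm 1 returns YES if and only if every L-resolvent of the candidate clause C = L ∨ C' with the partner clause D is valid, and it tests at most quadratically many resolvents: the procedure iterates over each literal N_k of D unifiable with ¬L, grows a set N of resolved literals, explicitly checks validity of the resolvent for each N, extends N only when every complementary pair in the current resolvent involves an instance of some Nᵢ, and breaks otherwise. -/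
open Classical in
/-- Multiset difference of clauses (classically). -/
noncomputable def msub {V Fn P : Type} (C N : Clause V Fn P) : Clause V Fn P :=
  letI := Classical.decEq (Lit V Fn P); C - N

/-- The unification problem of `L` with the complements of the literals of `M`. -/
noncomputable def prob {V Fn P : Type} (L : Lit V Fn P) (M : Clause V Fn P) : List (Lit V Fn P) :=
  L :: (M.map Lit.compl).toList

/-- The `L`-resolvent of `L ∨ C'` with `D`, resolving away the literals `M ⊆ D` via `σ`. -/
noncomputable def resOf {V Fn P : Type} (L : Lit V Fn P) (C' D M : Clause V Fn P) (σ : Subst V Fn) :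
    Clause V Fn P :=
  C'.subst σ + (msub D M).subst σ

/-- The literals `Nᵢ ∈ Ns \ M` whose instance `Nᵢσ` takes part in a complementary pair of the
current resolvent: Algorithm 1 extends the resolved set `M` by exactly these. -/
noncomputable def extSet {V Fn P : Type} (L : Lit V Fn P) (C' D Ns : Clause V Fn P)
    (sel : Clause V Fn P → Subst V Fn) (M : Clause V Fn P) : Clause V Fn P :=
  letI : DecidablePred fun Ni : Lit V Fn P =>
      (Ni.subst (sel M)).compl ∈ resOf L C' D M (sel M) :=
    fun _ => Classical.propDecidable _
  (msub Ns M).filter fun Ni => (Ni.subst (sel M)).compl ∈ resOf L C' D M (sel M)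

/-- The resolved sets `M` visited by Algorithm 1 (with mgu selector `sel`): it starts from each
singleton `{Nₖ}`, explicitly tests the corresponding resolvent for validity, and grows `M`
(only) when every complementary pair of the resolvent involves an instance `Nᵢσ`. -/
inductive Visited {V Fn P : Type} (L : Lit V Fn P) (C' D Ns : Clause V Fn P)
    (sel : Clause V Fn P → Subst V Fn) : Clause V Fn P → Prop
  | init (N : Lit V Fn P) (h : N ∈ Ns) : Visited L C' D Ns sel {N}
  | step (M : Clause V Fn P) (h : Visited L C' D Ns sel M)
      (hu : ∃ σ, IsUnifier σ (prob L M))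
      (hval : Clause.ValidEF (resOf L C' D M (sel M)))
      (hall : ∀ A : Atom V Fn P, (⟨true, A⟩ : Lit V Fn P) ∈ resOf L C' D M (sel M) →
          (⟨false, A⟩ : Lit V Fn P) ∈ resOf L C' D M (sel M) →
          ∃ Ni ∈ msub Ns M, Ni.subst (sel M) = (⟨true, A⟩ : Lit V Fn P) ∨
            Ni.subst (sel M) = (⟨false, A⟩ : Lit V Fn P))
      (hne : extSet L C' D Ns sel M ≠ 0) :
      Visited L C' D Ns sel (M + extSet L C' D Ns sel M)

/-!
The algorithm only ever computes resolvents for resolved sets `Mᵢ` of a growing chain. Given an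
arbitrary resolved set `M ⊆ Ns` with mgu `σ`, follow the chain from some singleton `{N} ⊆ M`
while it stays inside `M`. For each `Mᵢ ⊆ M` the mgu `σᵢ` of the smaller problem is more general
than `σ`, say `σ = σᵢγ`, and every literal of the resolvent for `Mᵢ` that is not an instance of a
literal of `M \ Mᵢ` survives, instantiated by `γ`, in the resolvent for `M`. So if some
complementary pair of the resolvent for `Mᵢ` avoids all instances of `Ns \ Mᵢ`, the resolvent for
`M` is valid. Otherwise the chain grows; if it leaves `M` it does so through some `Nⱼ ∉ M` whose
instance `Nⱼσᵢ` has its complement in the resolvent for `Mᵢ`, and then `Nⱼσ` together with its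
complement is a complementary pair of the resolvent for `M`. Since each step adds a literal, every
chain starts at one of the `|Ns|` singletons and has fewer than `|Ns|` steps.
-/

variable {V Fn P : Type}

theorem Term.subst_app (σ : Subst V Fn) (f : Fn) (ts : List (Term V Fn)) :
    Term.subst σ (.app f ts) = .app f (ts.map (Term.subst σ)) := by
  rw [Term.subst]
  simp

theorem Term.subst_subst_s16 (σ γ : Subst V Fn) :
    ∀ t : Term V Fn, (t.subst σ).subst γ = t.subst (σ.comp γ)
  | .var v => by simp [Term.subst, Subst.comp]
  | .app f ts => by
    rw [Term.subst_app, Term.subst_app, Term.subst_app, List.map_map]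
    exact congrArg _ (List.map_congr_left fun t ht => Term.subst_subst_s16 σ γ t)
  decreasing_by have := List.sizeOf_lt_of_mem ht; simp at *; omega

theorem Atom.subst_subst_s16 (σ γ : Subst V Fn) (A : Atom V Fn P) :
    (A.subst σ).subst γ = A.subst (σ.comp γ) := by
  simp [Atom.subst, Function.comp_def, Term.subst_subst_s16]

theorem Lit.subst_subst_s16 (σ γ : Subst V Fn) (l : Lit V Fn P) :
    (l.subst σ).subst γ = l.subst (σ.comp γ) := by
  simp [Lit.subst, Atom.subst_subst_s16]

theorem Lit.compl_subst_s16 (σ : Subst V Fn) (l : Lit V Fn P) :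
    (l.subst σ).compl = l.compl.subst σ := rfl

theorem Clause.validEF_of_mem_of_compl_mem {C : Clause V Fn P} {l : Lit V Fn P} (h : l ∈ C)
    (hc : l.compl ∈ C) : C.ValidEF := by
  rcases l with ⟨_ | _, A⟩
  exacts [⟨A, hc, h⟩, ⟨A, h, hc⟩]

theorem mem_prob {l L : Lit V Fn P} {M : Clause V Fn P} :
    l ∈ prob L M ↔ l = L ∨ ∃ N ∈ M, N.compl = l := by
  simp [prob]

theorem IsUnifier.prob_mono {σ : Subst V Fn} {L : Lit V Fn P} {M' M : Clause V Fn P}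
    (hu : IsUnifier σ (prob L M)) (h : M' ≤ M) : IsUnifier σ (prob L M') := by
  have hsub : ∀ l ∈ prob L M', l ∈ prob L M := by
    simp only [mem_prob]
    rintro l (rfl | ⟨N, hN, rfl⟩)
    exacts [Or.inl rfl, Or.inr ⟨N, Multiset.mem_of_le h hN, rfl⟩]
  exact fun l₁ h₁ l₂ h₂ => hu l₁ (hsub l₁ h₁) l₂ (hsub l₂ h₂)

theorem IsUnifier.pol_eq_of_mem {σ : Subst V Fn} {L N : Lit V Fn P} {M : Clause V Fn P}
    (hu : IsUnifier σ (prob L M)) (hN : N ∈ M) : N.pol = !L.pol := by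
  have h : (!N.pol) = L.pol :=
    congrArg Lit.pol (hu _ (mem_prob.2 (Or.inr ⟨N, hN, rfl⟩)) _ (mem_prob.2 (Or.inl rfl)))
  rw [← h, Bool.not_not]

section Msub

variable [DecidableEq (Lit V Fn P)]

theorem msub_eq_sub (C N : Clause V Fn P) : msub C N = C - N := by
  rw [msub, Subsingleton.elim (Classical.decEq _) ‹DecidableEq (Lit V Fn P)›]

theorem count_msub (a : Lit V Fn P) (C N : Clause V Fn P) :
    (msub C N).count a = C.count a - N.count a := by
  rw [msub_eq_sub, Multiset.count_sub]

theorem mem_msub {a : Lit V Fn P} {C N : Clause V Fn P} :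
    a ∈ msub C N ↔ N.count a < C.count a := by
  rw [← Multiset.count_pos, count_msub]
  omega

end Msub

section Algorithm

theorem mem_extSet {L : Lit V Fn P} {C' D Ns : Clause V Fn P} {sel : Clause V Fn P → Subst V Fn}
    {M : Clause V Fn P} {a : Lit V Fn P} :
    a ∈ extSet L C' D Ns sel M ↔
      a ∈ msub Ns M ∧ (a.subst (sel M)).compl ∈ resOf L C' D M (sel M) :=
  @Multiset.mem_filter _ _ (fun _ => Classical.propDecidable _) _ _

theorem extSet_le_msub (L : Lit V Fn P) (C' D Ns : Clause V Fn P)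
    (sel : Clause V Fn P → Subst V Fn) (M : Clause V Fn P) : extSet L C' D Ns sel M ≤ msub Ns M :=
  @Multiset.filter_le _ _ (fun _ => Classical.propDecidable _) _

variable {L : Lit V Fn P} {C' D Ns : Clause V Fn P} {sel : Clause V Fn P → Subst V Fn}

theorem subst_mem_resOf {M Mi : Clause V Fn P} {σi γ σ : Subst V Fn} (hγ : σi.comp γ = σ)
    {l : Lit V Fn P} (hl : l ∈ resOf L C' D Mi σi) (hK : ∀ K ∈ msub M Mi, K.subst σi ≠ l) :
    l.subst γ ∈ resOf L C' D M σ := by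
  classical
  simp only [resOf, Clause.subst, Multiset.mem_add, Multiset.mem_map] at hl ⊢
  rcases hl with ⟨e, he, rfl⟩ | ⟨K, hKD, rfl⟩
  · exact Or.inl ⟨e, he, by rw [Lit.subst_subst_s16, hγ]⟩
  · refine Or.inr ⟨K, ?_, by rw [Lit.subst_subst_s16, hγ]⟩
    by_contra hKM
    refine hK K ?_ rfl
    rw [mem_msub] at *
    omega

theorem validEF_resOf_of_unresolved_pair {M Mi : Clause V Fn P} {σi γ σ : Subst V Fn}
    (hγ : σi.comp γ = σ) (hM : M ≤ Ns) {A : Atom V Fn P}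
    (ht : (⟨true, A⟩ : Lit V Fn P) ∈ resOf L C' D Mi σi)
    (hf : (⟨false, A⟩ : Lit V Fn P) ∈ resOf L C' D Mi σi)
    (hA : ∀ K ∈ msub Ns Mi, K.subst σi ≠ ⟨true, A⟩ ∧ K.subst σi ≠ ⟨false, A⟩) :
    (resOf L C' D M σ).ValidEF := by
  classical
  have hK : ∀ K ∈ msub M Mi, K ∈ msub Ns Mi := fun K hK => by
    have := Multiset.count_le_of_le K hM
    rw [mem_msub] at *
    omega
  exact ⟨A.subst γ, subst_mem_resOf hγ ht fun K h => (hA K (hK K h)).1,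
    subst_mem_resOf hγ hf fun K h => (hA K (hK K h)).2⟩

theorem validEF_resOf_of_not_grow_le (hpol : ∀ N ∈ Ns, N.pol = !L.pol) (hD : Ns ≤ D)
    {M Mi : Clause V Fn P} {γ σ : Subst V Fn} (hγ : (sel Mi).comp γ = σ) (hM : M ≤ Ns)
    (hle : Mi ≤ M) (hgrow : ¬ Mi + extSet L C' D Ns sel Mi ≤ M) :
    (resOf L C' D M σ).ValidEF := by
  classical
  obtain ⟨N, hcount⟩ := not_forall.1 (mt Multiset.le_iff_count.2 hgrow)
  rw [not_le, Multiset.count_add] at hcount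
  have hMi := Multiset.count_le_of_le N hle
  have hext := Multiset.count_le_of_le N (extSet_le_msub L C' D Ns sel Mi)
  have hNext : 0 < (extSet L C' D Ns sel Mi).count N := by omega
  obtain ⟨hNs, hNres⟩ := mem_extSet.1 (Multiset.count_pos.1 hNext)
  rw [mem_msub] at hNs
  rw [count_msub] at hext
  have hND : N ∈ msub D M := by
    have := Multiset.count_le_of_le N hD
    rw [mem_msub]
    omega
  have hNpol := hpol N (Multiset.count_pos.1 (by omega))
  have hNσ : N.subst σ ∈ resOf L C' D M σ :=
    Multiset.mem_add.2 (Or.inr (Multiset.mem_map.2 ⟨N, hND, rfl⟩))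
  have hNσc : ((N.subst (sel Mi)).compl).subst γ ∈ resOf L C' D M σ := by
    refine subst_mem_resOf hγ hNres fun K hK heq => ?_
    -- `K ∈ M` and `N` both have the polarity of `¬L`, so `Kσᵢ` cannot be the complement of `Nσᵢ`
    rw [mem_msub] at hK
    have hKpol := hpol K (Multiset.mem_of_le hM (Multiset.count_pos.1 (by omega)))
    have := congrArg Lit.pol heq
    simp only [Lit.subst, Lit.compl, hKpol, hNpol] at this
    cases L.pol <;> simp at this
  rw [Lit.compl_subst_s16, Lit.subst_subst_s16, hγ, ← Lit.compl_subst_s16] at hNσc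
  exact Clause.validEF_of_mem_of_compl_mem hNσ hNσc

theorem Visited.le {M : Clause V Fn P} (h : Visited L C' D Ns sel M) : M ≤ Ns := by
  classical
  induction h with
  | init N hN => exact Multiset.singleton_le.2 hN
  | step M _ _ _ _ _ ih =>
    calc M + extSet L C' D Ns sel M ≤ M + msub Ns M :=
          add_le_add_right (extSet_le_msub L C' D Ns sel M) _
      _ = Ns := by rw [msub_eq_sub, add_tsub_cancel_of_le ih]

theorem Visited.ne_zero {M : Clause V Fn P} (h : Visited L C' D Ns sel M) : M ≠ 0 := by
  induction h with
  | init N _ => exact Multiset.singleton_ne_zero N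
  | step M _ _ _ _ _ ih => simp [ih]

theorem Visited.exists_eq_iterate {M : Clause V Fn P} (h : Visited L C' D Ns sel M) :
    ∃ N ∈ Ns, ∃ k < Multiset.card M,
      M = (fun X => X + extSet L C' D Ns sel X)^[k] ({N} : Clause V Fn P) := by
  induction h with
  | init N hN => exact ⟨N, hN, 0, by simp, rfl⟩
  | step M _ _ _ _ hne ih =>
    obtain ⟨N, hN, k, hk, rfl⟩ := ih
    refine ⟨N, hN, k + 1, ?_, by rw [Function.iterate_succ_apply']⟩
    rw [Multiset.card_add]
    have := Multiset.card_pos.2 hne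
    omega

theorem ncard_setOf_visited_le :
    {M | Visited L C' D Ns sel M}.ncard ≤ Multiset.card Ns * Multiset.card Ns := by
  classical
  let grow := fun X => X + extSet L C' D Ns sel X
  have hsub : {M | Visited L C' D Ns sel M} ⊆
      ↑((Ns.toFinset ×ˢ Finset.range (Multiset.card Ns)).image
        fun p => grow^[p.2] ({p.1} : Clause V Fn P)) := by
    intro M hM
    obtain ⟨N, hN, k, hk, rfl⟩ := Visited.exists_eq_iterate hM
    have := Multiset.card_le_card (Visited.le hM)
    simp only [Finset.coe_image, Finset.coe_product, Set.mem_image, Set.mem_prod,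
      Finset.mem_coe, Multiset.mem_toFinset, Finset.mem_range]
    exact ⟨(N, k), ⟨hN, by omega⟩, rfl⟩
  calc {M | Visited L C' D Ns sel M}.ncard
      ≤ ((Ns.toFinset ×ˢ Finset.range (Multiset.card Ns)).image
          fun p => grow^[p.2] ({p.1} : Clause V Fn P)).card := by
        rw [← Set.ncard_coe_finset]
        exact Set.ncard_le_ncard hsub (Finset.finite_toSet _)
    _ ≤ Ns.toFinset.card * Multiset.card Ns := by
        grw [Finset.card_image_le, Finset.card_product, Finset.card_range]
    _ ≤ Multiset.card Ns * Multiset.card Ns := by grw [Multiset.toFinset_card_le]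

theorem validEF_resOf_or_exists_visited_lt
    (hsel : ∀ M : Clause V Fn P, (∃ σ, IsUnifier σ (prob L M)) → IsMGU (sel M) (prob L M))
    (halg : ∀ M : Clause V Fn P, Visited L C' D Ns sel M → (∃ σ, IsUnifier σ (prob L M)) →
      (resOf L C' D M (sel M)).ValidEF)
    (hpol : ∀ N ∈ Ns, N.pol = !L.pol) (hD : Ns ≤ D)
    {M : Clause V Fn P} (hM : M ≤ Ns) {σ : Subst V Fn} (hσ : IsUnifier σ (prob L M))
    {Mi : Clause V Fn P} (hvis : Visited L C' D Ns sel Mi) (hle : Mi ≤ M) :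
    (resOf L C' D M σ).ValidEF ∨ ∃ Mi', Visited L C' D Ns sel Mi' ∧ Mi < Mi' ∧ Mi' ≤ M := by
  have hex : ∃ τ, IsUnifier τ (prob L Mi) := ⟨σ, hσ.prob_mono hle⟩
  obtain ⟨γ, hγ⟩ := (hsel Mi hex).2 σ (hσ.prob_mono hle)
  obtain ⟨A, ht, hf⟩ := halg Mi hvis hex
  by_cases hall : ∀ A : Atom V Fn P, (⟨true, A⟩ : Lit V Fn P) ∈ resOf L C' D Mi (sel Mi) →
      (⟨false, A⟩ : Lit V Fn P) ∈ resOf L C' D Mi (sel Mi) →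
      ∃ Ni ∈ msub Ns Mi, Ni.subst (sel Mi) = (⟨true, A⟩ : Lit V Fn P) ∨
        Ni.subst (sel Mi) = (⟨false, A⟩ : Lit V Fn P)
  · have hne : extSet L C' D Ns sel Mi ≠ 0 := by
      obtain ⟨Ni, hNi, hNiA | hNiA⟩ := hall A ht hf <;>
      · intro h
        have := mem_extSet.2 ⟨hNi, by rwa [hNiA]⟩
        simp [h] at this
    by_cases hgrow : Mi + extSet L C' D Ns sel Mi ≤ M
    · exact Or.inr ⟨_, .step Mi hvis hex ⟨A, ht, hf⟩ hall hne,
        lt_add_of_pos_right _ (pos_iff_ne_zero.2 hne), hgrow⟩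
    · exact Or.inl (validEF_resOf_of_not_grow_le hpol hD hγ hM hle hgrow)
  · push Not at hall
    obtain ⟨A, ht, hf, hA⟩ := hall
    exact Or.inl (validEF_resOf_of_unresolved_pair hγ hM ht hf hA)

theorem validEF_resOf_of_visited_le
    (hsel : ∀ M : Clause V Fn P, (∃ σ, IsUnifier σ (prob L M)) → IsMGU (sel M) (prob L M))
    (halg : ∀ M : Clause V Fn P, Visited L C' D Ns sel M → (∃ σ, IsUnifier σ (prob L M)) →
      (resOf L C' D M (sel M)).ValidEF)
    (hpol : ∀ N ∈ Ns, N.pol = !L.pol) (hD : Ns ≤ D)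
    {M : Clause V Fn P} (hM : M ≤ Ns) {σ : Subst V Fn} (hσ : IsUnifier σ (prob L M))
    {Mi : Clause V Fn P} (hvis : Visited L C' D Ns sel Mi) (hle : Mi ≤ M) :
    (resOf L C' D M σ).ValidEF := by
  obtain h | ⟨Mi', hvis', hlt, hle'⟩ :=
    validEF_resOf_or_exists_visited_lt hsel halg hpol hD hM hσ hvis hle
  · exact h
  · have := Multiset.card_lt_card hlt
    have := Multiset.card_le_card hle'
    exact validEF_resOf_of_visited_le hsel halg hpol hD hM hσ hvis' hle'
termination_by Multiset.card M - Multiset.card Mi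

end Algorithm

theorem stmt16_general {V Fn P : Type} (L : Lit V Fn P) (C' Ns Drest : Clause V Fn P)
    (sel : Clause V Fn P → Subst V Fn)
    -- `Ns` are exactly the literals of `D` unifying (pairwise) with `¬L`
    (hNs : ∀ N ∈ Ns, ∃ σ, IsUnifier σ (prob L {N}))
    -- `sel` picks a most general unifier whenever one exists
    (hsel : ∀ M : Clause V Fn P, (∃ σ, IsUnifier σ (prob L M)) → IsMGU (sel M) (prob L M)) :
    ((∀ M : Clause V Fn P, Visited L C' (Ns + Drest) Ns sel M →
        (∃ σ, IsUnifier σ (prob L M)) →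
        Clause.ValidEF (resOf L C' (Ns + Drest) M (sel M))) ↔
     (∀ M : Clause V Fn P, M ≤ Ns → M ≠ 0 → ∀ σ : Subst V Fn, IsMGU σ (prob L M) →
        Clause.ValidEF (resOf L C' (Ns + Drest) M σ))) ∧
    {M : Clause V Fn P | Visited L C' (Ns + Drest) Ns sel M}.ncard ≤
      Multiset.card Ns * Multiset.card Ns := by
  have hpol : ∀ N ∈ Ns, N.pol = !L.pol := fun N hN =>
    (hNs N hN).choose_spec.pol_eq_of_mem (Multiset.mem_singleton_self N)
  refine ⟨⟨fun halg M hM hM0 σ hσ => ?_, fun hres M hvis hex =>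
    hres M hvis.le hvis.ne_zero _ (hsel M hex)⟩, ncard_setOf_visited_le⟩
  obtain ⟨N, hN⟩ := Multiset.exists_mem_of_ne_zero hM0
  exact validEF_resOf_of_visited_le hsel halg hpol (Multiset.le_add_right _ _) hM hσ.1
    (.init N (Multiset.mem_of_le hM hN)) (Multiset.singleton_le.2 hN)

/-- Algorithm 1 returns YES (i.e., every explicitly tested resolvent along its traversal is
valid) if and only if every `L`-resolvent of `C = L ∨ C'` with `D = Ns + Drest` is valid;
moreover it tests at most quadratically many resolvents. -/
theorem stmt16 {V Fn P : Type} (L : Lit V Fn P) (C' Ns Drest : Clause V Fn P)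
    (sel : Clause V Fn P → Subst V Fn)
    -- `Ns` are exactly the literals of `D` unifying (pairwise) with `¬L`
    (hNs : ∀ N ∈ Ns, ∃ σ, IsUnifier σ (prob L {N}))
    (hDrest : ∀ M ∈ Drest, ¬ ∃ σ, IsUnifier σ (prob L {M}))
    -- `sel` picks a most general unifier whenever one exists
    (hsel : ∀ M : Clause V Fn P, (∃ σ, IsUnifier σ (prob L M)) → IsMGU (sel M) (prob L M)) :
    ((∀ M : Clause V Fn P, Visited L C' (Ns + Drest) Ns sel M →
        (∃ σ, IsUnifier σ (prob L M)) →
        Clause.ValidEF (resOf L C' (Ns + Drest) M (sel M))) ↔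
     (∀ M : Clause V Fn P, M ≤ Ns → M ≠ 0 → ∀ σ : Subst V Fn, IsMGU σ (prob L M) →
        Clause.ValidEF (resOf L C' (Ns + Drest) M σ))) ∧
    {M : Clause V Fn P | Visited L C' (Ns + Drest) Ns sel M}.ncard ≤
      Multiset.card Ns * Multiset.card Ns :=
  stmt16_general L C' Ns Drest sel hNs hsel
end
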